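/- Let μ₀ be a symmetric positive definite real 3×3 matrix, let η⁰ be a real symmetric positive definite 3×3 matrix with |η⁰| ≤ C_η and |(η⁰)⁻¹| ≤ C_{η⁻¹}, and let ν̲ > 0 with ν̲ ≤ C_ν and ν̲⁻¹ ≤ C_{ν⁻¹}. Define the symbol a(ξ) = μ₀^{−1/2} r(ξ)ᵗ (η⁰)⁻¹ r(ξ) μ₀^{−1/2} + ν̲ μ₀^{1/2} ξ ξᵗ μ₀^{1/2}. Then c₁|ξ|² I₃ ≤ a(ξ) ≤ c₂|ξ|² I₃ for all ξ ∈ ℝ³, where c₁ = α₀ (max{C_η, C_{ν⁻¹}})⁻¹ and c₂ = α₁ max{C_{η⁻¹}, C_ν}, with α₀ = min{|μ₀|⁻¹, |μ₀⁻¹|⁻¹}, α₁ = |μ₀| + |μ₀⁻¹|. -/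

import Mathlib

/-!
Put `y = μ₀^{-1/2} x`. The quadratic form of `a(ξ)` at `x` is
`(ξ × y) ⬝ (η⁰)⁻¹ (ξ × y) + ν̲ (ξ ⬝ μ₀ y)²`, and as `|η⁰|⁻¹ ≤ (η⁰)⁻¹ ≤ |(η⁰)⁻¹|` it lies between
`(max {C_η, C_{ν⁻¹}})⁻¹` and `max {C_{η⁻¹}, C_ν}` times `E = |ξ × y|² + (ξ ⬝ μ₀ y)²`.
By Lagrange's identity `|ξ × y|² = |ξ|² |y|² - (ξ ⬝ y)²`, so `E ≤ |ξ|² (|y|² + |μ₀^{1/2} x|²)`.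
For the lower bound let `α = α₀ ≤ 1`. Since `α ≤ |μ₀|⁻¹`, `B = 1 - α μ₀` is positive semidefinite,
and since `ξ ⬝ μ₀ ξ ≥ |μ₀⁻¹|⁻¹ |ξ|² ≥ α |ξ|²`, also `ξ ⬝ B ξ ≤ (1 - α²) |ξ|²`. Splitting
`ξ ⬝ y = ξ ⬝ B y + α (ξ ⬝ μ₀ y)`, Cauchy–Schwarz for `B` and `(b + α a)² ≤ b² / (1 - α²) + a²` give
`(ξ ⬝ y)² ≤ |ξ|² (y ⬝ B y) + (ξ ⬝ μ₀ y)²`, which is `E ≥ α |ξ|² |x|²`.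
-/

open Matrix

/-- The antisymmetric matrix `r(ξ)` of the cross product: `r(ξ) v = ξ × v`. -/
noncomputable def crossMat (ξ : Fin 3 → ℝ) : Matrix (Fin 3) (Fin 3) ℝ :=
  !![0, -ξ 2, ξ 1; ξ 2, 0, -ξ 0; -ξ 1, ξ 0, 0]

/-- The `ℓ²` operator norm `|A|` of a `3×3` real matrix. -/
noncomputable def opn (A : Matrix (Fin 3) (Fin 3) ℝ) : ℝ :=
  ‖Matrix.toEuclideanCLM (𝕜 := ℝ) A‖

/-- The symbol `a(ξ) = μ₀^{-1/2} r(ξ)ᵀ (η⁰)⁻¹ r(ξ) μ₀^{-1/2} + ν̲ μ₀^{1/2} ξξᵗ μ₀^{1/2}`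
of the effective operator. -/
noncomputable def effSymbol (m minv η0 : Matrix (Fin 3) (Fin 3) ℝ) (ν : ℝ)
    (ξ : Fin 3 → ℝ) : Matrix (Fin 3) (Fin 3) ℝ :=
  minv * (crossMat ξ)ᵀ * η0⁻¹ * crossMat ξ * minv + ν • (m * Matrix.vecMulVec ξ ξ * m)

-- Under this instance `‖A‖` is `opn A` by definition.
open scoped Matrix.Norms.L2Operator

theorem sq_add_mul_le_of_sq_le_mul {a b K D : ℝ} (hK : K ^ 2 ≤ 1) (hD : 0 ≤ D)
    (hb : b ^ 2 ≤ (1 - K ^ 2) * D) : (b + K * a) ^ 2 ≤ D + a ^ 2 := by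
  rcases hK.lt_or_eq with hK | hK
  · have h1K : 0 < 1 - K ^ 2 := by linarith
    refine le_of_mul_le_mul_left ?_ h1K
    -- `(1 - K²) (D + a² - (b + K a)²) = ((1 - K²) D - b²) + (K b - (1 - K²) a)²`
    nlinarith [sq_nonneg (K * b - (1 - K ^ 2) * a)]
  · have hb0 : b = 0 := by nlinarith [sq_nonneg b]
    rw [hb0, zero_add, mul_pow, hK, one_mul]
    linarith

theorem min_inv_le_one_of_one_le_mul {a b : ℝ} (ha : 0 ≤ a) (h : 1 ≤ a * b) :
    min a⁻¹ b⁻¹ ≤ 1 := by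
  rcases le_total 1 a with ha1 | ha1
  · exact (min_le_left _ _).trans (inv_le_one_of_one_le₀ ha1)
  · have hb : 0 < b := pos_of_mul_pos_right (by linarith) ha
    exact (min_le_right _ _).trans
      (inv_le_one_of_one_le₀ (by nlinarith [mul_le_mul_of_nonneg_right ha1 hb.le]))

namespace Matrix

variable {n : Type*} [Fintype n]

theorem dotProduct_self_nonneg {R : Type*} [Ring R] [LinearOrder R] [IsStrictOrderedRing R]
    (v : n → R) : 0 ≤ v ⬝ᵥ v :=
  Finset.sum_nonneg fun i _ => mul_self_nonneg (v i)

theorem IsSymm.dotProduct_mulVec_comm {R : Type*} [CommSemiring R] {A : Matrix n n R}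
    (hA : A.IsSymm) (u v : n → R) : u ⬝ᵥ A *ᵥ v = (A *ᵥ u) ⬝ᵥ v := by
  rw [dotProduct_mulVec, ← mulVec_transpose, hA.eq]

theorem IsSymm.mulVec_dotProduct_mulVec {R : Type*} [CommSemiring R] {A : Matrix n n R}
    (hA : A.IsSymm) (x : n → R) : (A *ᵥ x) ⬝ᵥ (A *ᵥ x) = x ⬝ᵥ (A * A) *ᵥ x := by
  rw [← hA.dotProduct_mulVec_comm, mulVec_mulVec]

theorem PosSemidef.dotProduct_mulVec_sq_le {A : Matrix n n ℝ} (hA : A.PosSemidef)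
    (x y : n → ℝ) : (x ⬝ᵥ A *ᵥ y) ^ 2 ≤ (x ⬝ᵥ A *ᵥ x) * (y ⬝ᵥ A *ᵥ y) := by
  let _ := A.toSeminormedAddCommGroup hA
  let _ := A.toInnerProductSpace hA
  have inner_eq (u v : n → ℝ) : inner ℝ u v = u ⬝ᵥ A *ᵥ v := by
    change (A *ᵥ v) ⬝ᵥ star u = _
    simp [dotProduct_comm]
  simpa only [inner_eq, sq] using real_inner_mul_inner_self_le x y

variable [DecidableEq n]

theorem IsSymm.mul_dotProduct_mulVec_le_sub_sq_add_sq {P : Matrix n n ℝ}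
    (hP : P.IsSymm) {α : ℝ} (hα₀ : 0 ≤ α) (hα₁ : α ≤ 1)
    (hPα : ∀ y, α * (y ⬝ᵥ P *ᵥ y) ≤ y ⬝ᵥ y) {ξ : n → ℝ} (hξ : α * (ξ ⬝ᵥ ξ) ≤ ξ ⬝ᵥ P *ᵥ ξ)
    (y : n → ℝ) :
    α * (ξ ⬝ᵥ ξ) * (y ⬝ᵥ P *ᵥ y) ≤ (ξ ⬝ᵥ ξ) * (y ⬝ᵥ y) - (ξ ⬝ᵥ y) ^ 2 + ((P *ᵥ ξ) ⬝ᵥ y) ^ 2 := by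
  set B := 1 - α • P
  have hB (u v : n → ℝ) : u ⬝ᵥ B *ᵥ v = u ⬝ᵥ v - α * ((P *ᵥ u) ⬝ᵥ v) := by
    simp [B, sub_mulVec, smul_mulVec, dotProduct_sub, hP.dotProduct_mulVec_comm]
  have hBpsd : B.PosSemidef := by
    refine PosSemidef.of_dotProduct_mulVec_nonneg ?_ fun u => ?_
    · simpa [B, IsHermitian] using (isSymm_one.sub (hP.smul α)).eq
    · have := hPα u
      rw [star_trivial, hB, ← hP.dotProduct_mulVec_comm]
      linarith
  have hξB : ξ ⬝ᵥ B *ᵥ ξ ≤ (1 - α ^ 2) * (ξ ⬝ᵥ ξ) := by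
    rw [hB, ← hP.dotProduct_mulVec_comm]
    nlinarith [mul_le_mul_of_nonneg_left hξ hα₀]
  have hγ : 0 ≤ y ⬝ᵥ B *ᵥ y := by simpa using hBpsd.dotProduct_mulVec_nonneg y
  have ht : (ξ ⬝ᵥ B *ᵥ y) ^ 2 ≤ (1 - α ^ 2) * ((ξ ⬝ᵥ ξ) * (y ⬝ᵥ B *ᵥ y)) := by
    nlinarith [hBpsd.dotProduct_mulVec_sq_le ξ y, mul_le_mul_of_nonneg_right hξB hγ]
  have key := sq_add_mul_le_of_sq_le_mul (a := (P *ᵥ ξ) ⬝ᵥ y) (by nlinarith)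
    (mul_nonneg (dotProduct_self_nonneg ξ) hγ) ht
  rw [hB, hB, ← hP.dotProduct_mulVec_comm y, sub_add_cancel] at key
  linarith

theorem dotProduct_mulVec_le_norm_mul (A : Matrix n n ℝ) (x : n → ℝ) :
    x ⬝ᵥ A *ᵥ x ≤ ‖A‖ * (x ⬝ᵥ x) := by
  set v := WithLp.toLp 2 x
  have hv : x ⬝ᵥ x = ‖v‖ ^ 2 := by
    rw [← real_inner_self_eq_norm_sq, EuclideanSpace.inner_eq_star_dotProduct]
    simp [v]
  calc x ⬝ᵥ A *ᵥ x = inner ℝ v (toEuclideanCLM (𝕜 := ℝ) A v) := (inner_toEuclideanCLM A v v).symm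
    _ ≤ ‖v‖ * (‖A‖ * ‖v‖) :=
      (real_inner_le_norm _ _).trans (by gcongr; exact (toEuclideanCLM (𝕜 := ℝ) A).le_opNorm v)
    _ = ‖A‖ * (x ⬝ᵥ x) := by rw [hv]; ring

theorem inv_norm_mul_dotProduct_mulVec_le (A : Matrix n n ℝ) (x : n → ℝ) :
    ‖A‖⁻¹ * (x ⬝ᵥ A *ᵥ x) ≤ x ⬝ᵥ x := by
  rcases (norm_nonneg A).eq_or_lt with hA | hA
  · simp [← hA, dotProduct_self_nonneg]
  · rw [inv_mul_le_iff₀ hA]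
    exact dotProduct_mulVec_le_norm_mul A x

theorem PosDef.inv_norm_mul_dotProduct_le {A : Matrix n n ℝ} (hA : A.PosDef) (x : n → ℝ) :
    ‖A‖⁻¹ * (x ⬝ᵥ x) ≤ x ⬝ᵥ A⁻¹ *ᵥ x := by
  have hsymm : A.IsSymm := by simpa using hA.isHermitian
  have hAA : A *ᵥ (A⁻¹ *ᵥ x) = x := by
    rw [mulVec_mulVec, mul_nonsing_inv _ ((isUnit_iff_isUnit_det A).mp hA.isUnit), one_mulVec]
  have hinv : 0 ≤ x ⬝ᵥ A⁻¹ *ᵥ x := by simpa using hA.inv.posSemidef.dotProduct_mulVec_nonneg x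
  have hcs : (x ⬝ᵥ x) ^ 2 ≤ (x ⬝ᵥ A⁻¹ *ᵥ x) * (x ⬝ᵥ A *ᵥ x) := by
    have := hA.posSemidef.dotProduct_mulVec_sq_le (A⁻¹ *ᵥ x) x
    rwa [hsymm.dotProduct_mulVec_comm, hAA, dotProduct_comm (A⁻¹ *ᵥ x)] at this
  rcases (dotProduct_self_nonneg x).eq_or_lt with hx | hx
  · rw [← hx, mul_zero]
    exact hinv
  · have : x ⬝ᵥ x ≤ ‖A‖ * (x ⬝ᵥ A⁻¹ *ᵥ x) := by
      nlinarith [mul_le_mul_of_nonneg_left (dotProduct_mulVec_le_norm_mul A x) hinv]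
    have hApos : 0 < ‖A‖ := by nlinarith [norm_nonneg A]
    rwa [inv_mul_le_iff₀ hApos]

theorem posSemidef_sub_smul_one_of_le {A : Matrix n n ℝ} (hA : A.IsSymm) {c : ℝ}
    (h : ∀ x, c * (x ⬝ᵥ x) ≤ x ⬝ᵥ A *ᵥ x) : (A - c • 1).PosSemidef := by
  refine PosSemidef.of_dotProduct_mulVec_nonneg (by simpa using hA.sub (isSymm_one.smul c))
    fun x => ?_
  simpa [sub_mulVec, smul_mulVec, dotProduct_sub] using h x

theorem posSemidef_smul_one_sub_of_le {A : Matrix n n ℝ} (hA : A.IsSymm) {c : ℝ}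
    (h : ∀ x, x ⬝ᵥ A *ᵥ x ≤ c * (x ⬝ᵥ x)) : (c • 1 - A).PosSemidef := by
  refine PosSemidef.of_dotProduct_mulVec_nonneg (by simpa using (isSymm_one.smul c).sub hA)
    fun x => ?_
  simpa [sub_mulVec, smul_mulVec, dotProduct_sub] using h x

end Matrix

theorem crossMat_mulVec (ξ v : Fin 3 → ℝ) : crossMat ξ *ᵥ v = ξ ⨯₃ v := by
  ext i
  fin_cases i <;> simp [crossMat, cross_apply, mulVec, dotProduct, Fin.sum_univ_three] <;> ring

section Symbol

variable {m minv η0 : Matrix (Fin 3) (Fin 3) ℝ}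

theorem isSymm_effSymbol (hm : m.IsSymm) (hminv : minv.IsSymm) (hη0 : η0.IsSymm) (ν : ℝ)
    (ξ : Fin 3 → ℝ) : (effSymbol m minv η0 ν ξ).IsSymm := by
  simp only [effSymbol, IsSymm, transpose_add, transpose_smul, transpose_mul, transpose_transpose,
    hm.eq, hminv.eq, hη0.inv.eq, transpose_vecMulVec, Matrix.mul_assoc]

theorem dotProduct_effSymbol_mulVec (hm : m.IsSymm) (hminv : minv.IsSymm) (ν : ℝ)
    (ξ x : Fin 3 → ℝ) :
    x ⬝ᵥ effSymbol m minv η0 ν ξ *ᵥ x =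
      (ξ ⨯₃ (minv *ᵥ x)) ⬝ᵥ η0⁻¹ *ᵥ (ξ ⨯₃ (minv *ᵥ x)) + ν * (ξ ⬝ᵥ m *ᵥ x) ^ 2 := by
  simp only [effSymbol, add_mulVec, smul_mulVec, dotProduct_add, dotProduct_smul, ← mulVec_mulVec,
    ← crossMat_mulVec, vecMulVec_mulVec, op_smul_eq_smul, mulVec_smul, smul_eq_mul]
  rw [hminv.dotProduct_mulVec_comm, dotProduct_mulVec (minv *ᵥ x), vecMul_transpose,
    hm.dotProduct_mulVec_comm, dotProduct_comm x]
  ring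

theorem mul_cross_add_sq_le_dotProduct_effSymbol_mulVec (hm : m.IsSymm) (hminv : minv.IsSymm)
    (hη0 : η0.PosDef) {c ν : ℝ} (hcη : c ≤ (opn η0)⁻¹) (hcν : c ≤ ν) (ξ x : Fin 3 → ℝ) :
    c * ((ξ ⨯₃ (minv *ᵥ x)) ⬝ᵥ (ξ ⨯₃ (minv *ᵥ x)) + (ξ ⬝ᵥ m *ᵥ x) ^ 2) ≤
      x ⬝ᵥ effSymbol m minv η0 ν ξ *ᵥ x := by
  rw [dotProduct_effSymbol_mulVec hm hminv]
  set w := ξ ⨯₃ (minv *ᵥ x)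
  have hw : c * (w ⬝ᵥ w) ≤ w ⬝ᵥ η0⁻¹ *ᵥ w :=
    (mul_le_mul_of_nonneg_right hcη (dotProduct_self_nonneg w)).trans
      (hη0.inv_norm_mul_dotProduct_le w)
  nlinarith [mul_le_mul_of_nonneg_right hcν (sq_nonneg (ξ ⬝ᵥ m *ᵥ x))]

theorem dotProduct_effSymbol_mulVec_le_mul_cross_add_sq (hm : m.IsSymm) (hminv : minv.IsSymm)
    {C ν : ℝ} (hCη : opn η0⁻¹ ≤ C) (hCν : ν ≤ C) (ξ x : Fin 3 → ℝ) :
    x ⬝ᵥ effSymbol m minv η0 ν ξ *ᵥ x ≤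
      C * ((ξ ⨯₃ (minv *ᵥ x)) ⬝ᵥ (ξ ⨯₃ (minv *ᵥ x)) + (ξ ⬝ᵥ m *ᵥ x) ^ 2) := by
  rw [dotProduct_effSymbol_mulVec hm hminv]
  set w := ξ ⨯₃ (minv *ᵥ x)
  have hw : w ⬝ᵥ η0⁻¹ *ᵥ w ≤ C * (w ⬝ᵥ w) :=
    (dotProduct_mulVec_le_norm_mul _ w).trans
      (mul_le_mul_of_nonneg_right hCη (dotProduct_self_nonneg w))
  nlinarith [mul_le_mul_of_nonneg_right hCν (sq_nonneg (ξ ⬝ᵥ m *ᵥ x))]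

end Symbol

section SquareRoot

variable {μ m minv : Matrix (Fin 3) (Fin 3) ℝ}

theorem min_inv_opn_mul_le_cross_add_sq (hμsym : μ.IsSymm) (hμ : μ.PosDef) (hm : m.IsSymm)
    (hmsq : m * m = μ) (hminv : m * minv = 1) (ξ x : Fin 3 → ℝ) :
    min (opn μ)⁻¹ (opn μ⁻¹)⁻¹ * (ξ ⬝ᵥ ξ) * (x ⬝ᵥ x) ≤
      (ξ ⨯₃ (minv *ᵥ x)) ⬝ᵥ (ξ ⨯₃ (minv *ᵥ x)) + (ξ ⬝ᵥ m *ᵥ x) ^ 2 := by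
  have hdet : IsUnit μ.det := (isUnit_iff_isUnit_det μ).mp hμ.isUnit
  have hα₀ : 0 ≤ min (opn μ)⁻¹ (opn μ⁻¹)⁻¹ :=
    le_min (inv_nonneg.mpr (norm_nonneg _)) (inv_nonneg.mpr (norm_nonneg _))
  have hα₁ : min (opn μ)⁻¹ (opn μ⁻¹)⁻¹ ≤ 1 := by
    refine min_inv_le_one_of_one_le_mul (norm_nonneg _) ?_
    calc (1 : ℝ) = ‖μ * μ⁻¹‖ := by rw [mul_nonsing_inv _ hdet, norm_one]
      _ ≤ opn μ * opn μ⁻¹ := norm_mul_le _ _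
  have hPα (y : Fin 3 → ℝ) : min (opn μ)⁻¹ (opn μ⁻¹)⁻¹ * (y ⬝ᵥ μ *ᵥ y) ≤ y ⬝ᵥ y :=
    (mul_le_mul_of_nonneg_right (min_le_left _ _)
      (by simpa using hμ.posSemidef.dotProduct_mulVec_nonneg y)).trans
      (inv_norm_mul_dotProduct_mulVec_le μ y)
  have hξ : min (opn μ)⁻¹ (opn μ⁻¹)⁻¹ * (ξ ⬝ᵥ ξ) ≤ ξ ⬝ᵥ μ *ᵥ ξ := by
    refine (mul_le_mul_of_nonneg_right (min_le_right _ _) (dotProduct_self_nonneg ξ)).trans ?_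
    have := hμ.inv.inv_norm_mul_dotProduct_le ξ
    rwa [nonsing_inv_nonsing_inv _ hdet] at this
  set y := minv *ᵥ x
  have hx : m *ᵥ y = x := by rw [mulVec_mulVec, hminv, one_mulVec]
  have hxx : x ⬝ᵥ x = y ⬝ᵥ μ *ᵥ y := by
    rw [← hx, hm.mulVec_dotProduct_mulVec, hmsq]
  have hb : ξ ⬝ᵥ m *ᵥ x = (μ *ᵥ ξ) ⬝ᵥ y := by
    rw [← hx, mulVec_mulVec, hmsq, hμsym.dotProduct_mulVec_comm]
  rw [hxx, hb, cross_dot_cross, dotProduct_comm y ξ]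
  linarith [hμsym.mul_dotProduct_mulVec_le_sub_sq_add_sq hα₀ hα₁ hPα hξ y]

theorem cross_add_sq_le_opn_add_mul (hm : m.IsSymm) (hminv : minv.IsSymm) (hmsq : m * m = μ)
    (hmminv : m * minv = 1) (ξ x : Fin 3 → ℝ) :
    (ξ ⨯₃ (minv *ᵥ x)) ⬝ᵥ (ξ ⨯₃ (minv *ᵥ x)) + (ξ ⬝ᵥ m *ᵥ x) ^ 2 ≤
      (opn μ + opn μ⁻¹) * (ξ ⬝ᵥ ξ) * (x ⬝ᵥ x) := by
  have hμinv : μ⁻¹ = minv * minv := by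
    refine inv_eq_right_inv ?_
    rw [← hmsq, Matrix.mul_assoc, ← Matrix.mul_assoc m minv, hmminv, Matrix.one_mul, hmminv]
  have hy : (minv *ᵥ x) ⬝ᵥ (minv *ᵥ x) ≤ opn μ⁻¹ * (x ⬝ᵥ x) := by
    rw [hminv.mulVec_dotProduct_mulVec, ← hμinv]
    exact dotProduct_mulVec_le_norm_mul _ _
  have hz : (m *ᵥ x) ⬝ᵥ (m *ᵥ x) ≤ opn μ * (x ⬝ᵥ x) := by
    rw [hm.mulVec_dotProduct_mulVec, hmsq]
    exact dotProduct_mulVec_le_norm_mul _ _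
  have hcross : (ξ ⨯₃ (minv *ᵥ x)) ⬝ᵥ (ξ ⨯₃ (minv *ᵥ x)) ≤
      (ξ ⬝ᵥ ξ) * ((minv *ᵥ x) ⬝ᵥ (minv *ᵥ x)) := by
    rw [cross_dot_cross, dotProduct_comm (minv *ᵥ x) ξ]
    nlinarith [sq_nonneg (ξ ⬝ᵥ minv *ᵥ x)]
  have hb : (ξ ⬝ᵥ m *ᵥ x) ^ 2 ≤ (ξ ⬝ᵥ ξ) * ((m *ᵥ x) ⬝ᵥ (m *ᵥ x)) := by
    simpa using PosSemidef.one.dotProduct_mulVec_sq_le ξ (m *ᵥ x)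
  have hN := dotProduct_self_nonneg ξ
  nlinarith [mul_le_mul_of_nonneg_left hy hN, mul_le_mul_of_nonneg_left hz hN]

end SquareRoot

theorem effSymbol_two_sided_bound_general (μ₀ m minv η0 : Matrix (Fin 3) (Fin 3) ℝ)
    (hμsym : μ₀.IsSymm) (hμpos : μ₀.PosDef)
    (hm : m.PosDef) (hmsq : m * m = μ₀)
    (hminv : m * minv = 1)
    (hη0sym : η0.IsSymm) (hη0pos : η0.PosDef)
    (ν Cη Cηinv Cν Cνinv : ℝ) (hν : 0 < ν)
    (hCη : opn η0 ≤ Cη) (hCηinv : opn η0⁻¹ ≤ Cηinv)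
    (hCν : ν ≤ Cν) (hCνinv : ν⁻¹ ≤ Cνinv)
    (ξ : Fin 3 → ℝ) :
    (effSymbol m minv η0 ν ξ -
        (min (opn μ₀)⁻¹ (opn μ₀⁻¹)⁻¹ * (max Cη Cνinv)⁻¹ * ∑ i, ξ i ^ 2) •
          (1 : Matrix (Fin 3) (Fin 3) ℝ)).PosSemidef ∧
      (((opn μ₀ + opn μ₀⁻¹) * max Cηinv Cν * ∑ i, ξ i ^ 2) •
          (1 : Matrix (Fin 3) (Fin 3) ℝ) - effSymbol m minv η0 ν ξ).PosSemidef := by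
  have hmT : m.IsSymm := by simpa using hm.isHermitian
  have hminvT : minv.IsSymm := inv_eq_right_inv hminv ▸ hmT.inv
  have hsym := isSymm_effSymbol hmT hminvT hη0sym ν ξ
  have hsum : ∑ i, ξ i ^ 2 = ξ ⬝ᵥ ξ := by simp [dotProduct, sq]
  have hη0norm : 0 < ‖η0‖ := norm_pos_iff.mpr hη0pos.isUnit.ne_zero
  have hK₁ : 0 < max Cη Cνinv := hη0norm.trans_le (hCη.trans (le_max_left _ _))
  have hK₂ : 0 ≤ max Cηinv Cν := (norm_nonneg _).trans (hCηinv.trans (le_max_left _ _))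
  rw [hsum]
  refine ⟨posSemidef_sub_smul_one_of_le hsym fun x => ?_,
    posSemidef_smul_one_sub_of_le hsym fun x => ?_⟩
  · calc _ = (max Cη Cνinv)⁻¹ * (min (opn μ₀)⁻¹ (opn μ₀⁻¹)⁻¹ * (ξ ⬝ᵥ ξ) * (x ⬝ᵥ x)) := by ring
      _ ≤ (max Cη Cνinv)⁻¹ * _ := mul_le_mul_of_nonneg_left
          (min_inv_opn_mul_le_cross_add_sq hμsym hμpos hmT hmsq hminv ξ x) (inv_nonneg.mpr hK₁.le)
      _ ≤ _ := mul_cross_add_sq_le_dotProduct_effSymbol_mulVec hmT hminvT hη0pos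
          (inv_anti₀ hη0norm (hCη.trans (le_max_left _ _)))
          (inv_le_of_inv_le₀ hν (hCνinv.trans (le_max_right _ _))) ξ x
  · calc _ ≤ max Cηinv Cν * _ := dotProduct_effSymbol_mulVec_le_mul_cross_add_sq hmT hminvT
          (hCηinv.trans (le_max_left _ _)) (hCν.trans (le_max_right _ _)) ξ x
      _ ≤ max Cηinv Cν * ((opn μ₀ + opn μ₀⁻¹) * (ξ ⬝ᵥ ξ) * (x ⬝ᵥ x)) := mul_le_mul_of_nonneg_left
          (cross_add_sq_le_opn_add_mul hmT hminvT hmsq hminv ξ x) hK₂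
      _ = _ := by ring

/-- Two-sided bound `c₁ |ξ|² I₃ ≤ a(ξ) ≤ c₂ |ξ|² I₃` on the symbol of the effective
operator, with `c₁ = α₀ (max{C_η, C_{ν⁻¹}})⁻¹`, `c₂ = α₁ max{C_{η⁻¹}, C_ν}`,
`α₀ = min{|μ₀|⁻¹, |μ₀⁻¹|⁻¹}`, `α₁ = |μ₀| + |μ₀⁻¹|`. -/
theorem effSymbol_two_sided_bound (μ₀ m minv η0 : Matrix (Fin 3) (Fin 3) ℝ)
    (hμsym : μ₀.IsSymm) (hμpos : μ₀.PosDef)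
    (hm : m.PosDef) (hmsq : m * m = μ₀)
    (hminv : m * minv = 1) (hminv' : minv * m = 1)
    (hη0sym : η0.IsSymm) (hη0pos : η0.PosDef)
    (ν Cη Cηinv Cν Cνinv : ℝ) (hν : 0 < ν)
    (hCη : opn η0 ≤ Cη) (hCηinv : opn η0⁻¹ ≤ Cηinv)
    (hCν : ν ≤ Cν) (hCνinv : ν⁻¹ ≤ Cνinv)
    (ξ : Fin 3 → ℝ) :
    (effSymbol m minv η0 ν ξ -
        (min (opn μ₀)⁻¹ (opn μ₀⁻¹)⁻¹ * (max Cη Cνinv)⁻¹ * ∑ i, ξ i ^ 2) •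
          (1 : Matrix (Fin 3) (Fin 3) ℝ)).PosSemidef ∧
      (((opn μ₀ + opn μ₀⁻¹) * max Cηinv Cν * ∑ i, ξ i ^ 2) •
          (1 : Matrix (Fin 3) (Fin 3) ℝ) - effSymbol m minv η0 ν ξ).PosSemidef :=
  effSymbol_two_sided_bound_general μ₀ m minv η0 hμsym hμpos hm hmsq hminv hη0sym hη0pos ν Cη Cηinv
    Cν Cνinv hν hCη hCηinv hCν hCνinv ξ
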